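/- Kalman determinant identity for a structured single-input pair (arising in stabilization of the 1D semilinear heat equation): Let n ≥ 1, and let λ₁, …, λₙ, a₁, …, aₙ, b₁, …, bₙ be real numbers. Define the (n+1)×(n+1) real matrix Aₙ, with rows and columns indexed by 0, 1, …, n, by: the 0-th row of Aₙ is zero; (Aₙ)_{i,0} = aᵢ for 1 ≤ i ≤ n; (Aₙ)_{i,i} = λᵢ for 1 ≤ i ≤ n; and all other entries are zero. Define the column vector Bₙ ∈ ℝ^{n+1} by (Bₙ)₀ = 1 and (Bₙ)ᵢ = bᵢ for 1 ≤ i ≤ n. Then the determinant of the (n+1)×(n+1) Kalman matrix satisfies det( Bₙ, AₙBₙ, Aₙ²Bₙ, …, AₙⁿBₙ ) = ( ∏_{j=1}^{n} (a_j + λ_j b_j) ) · ∏_{1 ≤ i < j ≤ n} (λ_j − λ_i). In particular, if the λ_j are pairwise distinct and a_j + λ_j b_j ≠ 0 for every j, then the pair (Aₙ, Bₙ) satisfies the Kalman condition rank(Bₙ, AₙBₙ, …, AₙⁿBₙ) = n + 1. -/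
import Mathlib


open Matrix Finset

/-- The structured matrix `Aₙ` of size `(n+1)×(n+1)` (rows/columns indexed by `0,…,n`):
the `0`-th row is zero, `(Aₙ)_{i,0} = aᵢ` and `(Aₙ)_{i,i} = λᵢ` for `1 ≤ i ≤ n`, and all
other entries vanish. -/
noncomputable def structA {n : ℕ} (lam a : Fin n → ℝ) :
    Matrix (Fin (n + 1)) (Fin (n + 1)) ℝ :=
  Matrix.of fun i j =>
    if hi : i = 0 then 0
    else if j = 0 then a (i.pred hi)
    else if j = i then lam (i.pred hi) else 0

/-- The structured vector `Bₙ ∈ ℝ^{n+1}`: `(Bₙ)₀ = 1` and `(Bₙ)ᵢ = bᵢ` for `1 ≤ i ≤ n`. -/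
noncomputable def structB {n : ℕ} (b : Fin n → ℝ) : Fin (n + 1) → ℝ :=
  fun i => if hi : i = 0 then 1 else b (i.pred hi)

lemma structA_mulVec {n : ℕ} (lam a : Fin n → ℝ) (v : Fin (n+1) → ℝ) (i : Fin (n+1)) :
    (structA lam a *ᵥ v) i =
      if hi : i = 0 then 0 else a (i.pred hi) * v 0 + lam (i.pred hi) * v i := by
  simp only [mulVec, dotProduct, structA, of_apply]
  split
  · simp
  · rename_i hi
    have : ∀ j : Fin (n+1),
        (if j = 0 then a (i.pred hi) else if j = i then lam (i.pred hi) else 0) * v j =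
        (if j = 0 then a (i.pred hi) * v 0 else 0) + (if j = i then lam (i.pred hi) * v i else 0) := by
      intro j
      by_cases h0 : j = 0
      · subst h0; simp [Ne.symm hi]
      · by_cases h1 : j = i
        · subst h1; simp [h0]
        · simp [h0, h1]
    rw [Finset.sum_congr rfl fun j _ => this j, Finset.sum_add_distrib]
    simp

lemma pow_mulVec {n : ℕ} (lam a b : Fin n → ℝ) (k : ℕ) (i : Fin (n+1)) :
    ((structA lam a) ^ k *ᵥ structB b) i =
      if hi : i = 0 then (if k = 0 then 1 else 0)
      else if k = 0 then b (i.pred hi)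
      else lam (i.pred hi) ^ (k-1) * (a (i.pred hi) + lam (i.pred hi) * b (i.pred hi)) := by
  induction k generalizing i with
  | zero => simp [structB]
  | succ k ih =>
    rw [pow_succ', ← mulVec_mulVec, structA_mulVec]
    by_cases hi : i = 0
    · simp [hi]
    · simp only [dif_neg hi, ih, dif_pos]
      rcases Nat.eq_zero_or_pos k with hk | hk
      · subst hk
        simp
      · rw [if_neg hk.ne', if_neg hk.ne']
        simp only [Nat.succ_ne_zero, if_false]
        have h1 : k + 1 - 1 = (k-1)+1 := by omega
        rw [h1, pow_succ]
        ring

/-- The single-input Kalman matrix `(v, Mv, M²v, …, Mⁿv)` of a pair `(M,v)` of size `n+1`. -/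
noncomputable def kalmanMatrixSingle {n : ℕ} (M : Matrix (Fin (n + 1)) (Fin (n + 1)) ℝ)
    (v : Fin (n + 1) → ℝ) : Matrix (Fin (n + 1)) (Fin (n + 1)) ℝ :=
  Matrix.of fun i k => (M ^ (k : ℕ) *ᵥ v) i

/-- **Kalman determinant identity for a structured single-input pair** (arising in the
stabilization of the 1D semilinear heat equation):
`det(Bₙ, AₙBₙ, …, AₙⁿBₙ) = (∏ⱼ (aⱼ + λⱼbⱼ)) · ∏_{i<j} (λⱼ − λᵢ)`.
In particular, if the `λⱼ` are pairwise distinct and `aⱼ + λⱼbⱼ ≠ 0` for every `j`, then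
the pair `(Aₙ,Bₙ)` satisfies the Kalman condition `rank = n+1`. -/
theorem kalman_determinant_identity {n : ℕ} (hn : 1 ≤ n) (lam a b : Fin n → ℝ) :
    ((kalmanMatrixSingle (structA lam a) (structB b)).det =
      (∏ j, (a j + lam j * b j)) * ∏ i : Fin n, ∏ j ∈ Finset.Ioi i, (lam j - lam i)) ∧
    ((Function.Injective lam ∧ ∀ j, a j + lam j * b j ≠ 0) →
      (kalmanMatrixSingle (structA lam a) (structB b)).rank = n + 1) := by
  set K := kalmanMatrixSingle (structA lam a) (structB b) with hKdef
  have hdet : K.det =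
      (∏ j, (a j + lam j * b j)) * ∏ i : Fin n, ∏ j ∈ Finset.Ioi i, (lam j - lam i) := by
    rw [Matrix.det_succ_row_zero]
    have hrow : ∀ j : Fin (n+1), K 0 j = if j = 0 then 1 else 0 := by
      intro j
      simp only [hKdef, kalmanMatrixSingle, of_apply, pow_mulVec, dif_pos rfl]
      by_cases hj : j = 0
      · simp [hj]
      · have : (j : ℕ) ≠ 0 := fun h => hj (Fin.ext h)
        simp [hj, this]
    rw [Finset.sum_eq_single 0]
    · rw [hrow, if_pos rfl, Fin.succAbove_zero]
      have hminor : K.submatrix Fin.succ Fin.succ =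
          Matrix.diagonal (fun j => a j + lam j * b j) * Matrix.vandermonde lam := by
        ext i k
        simp only [Matrix.submatrix_apply, hKdef, kalmanMatrixSingle, of_apply, pow_mulVec,
          Matrix.diagonal_mul, Matrix.vandermonde_apply]
        have h1 : (i.succ : Fin (n+1)) ≠ 0 := Fin.succ_ne_zero i
        have h2 : ((k.succ : Fin (n+1)) : ℕ) = (k : ℕ) + 1 := rfl
        rw [dif_neg h1, h2]
        simp [Fin.pred_succ]
        ring
      rw [hminor, Matrix.det_mul, Matrix.det_diagonal, Matrix.det_vandermonde]
      simp
    · intro j _ hj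
      rw [hrow, if_neg hj]
      ring
    · intro h; exact absurd (Finset.mem_univ 0) h
  refine ⟨hdet, fun ⟨hinj, hne⟩ => ?_⟩
  have hdne : K.det ≠ 0 := by
    rw [hdet]
    apply mul_ne_zero
    · exact Finset.prod_ne_zero_iff.mpr fun j _ => hne j
    · refine Finset.prod_ne_zero_iff.mpr fun i _ => Finset.prod_ne_zero_iff.mpr fun j hj => ?_
      have : i < j := Finset.mem_Ioi.mp hj
      exact sub_ne_zero.mpr fun h => absurd (hinj h) (ne_of_gt this)
  have := Matrix.rank_of_isUnit K ((Matrix.isUnit_iff_isUnit_det K).mpr (isUnit_iff_ne_zero.mpr hdne))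
  simpa using this
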